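/- arXiv:1312.2299 — 2 statements merged into one kernel-verified Lean document; each statement's English description precedes it below -/
import Mathlib

section
/- Let R : ℝ → ℝ be differentiable and concave on [0,1] with R(0) = R(1) = 0, and let κ* ∈ [0,1] be a point where R attains its maximum over [0,1]. Let S : ℝ → ℝ be differentiable, convex, and nonincreasing on [0,1] with S(1) = 0. Then ∫_{κ*}^{1} R'(q)·S(q) dq ≥ −(1/2)·S(κ*)·R(κ*). -/
open MeasureTheory intervalIntegral
open Set

/-! On `[κ*, 1]` the derivative `R'` is nonpositive and convexity keeps `S` below its chord
`S(κ*) (1 - q) / (1 - κ*)`, so `∫ R' S ≥ S(κ*) / (1 - κ*) · ∫ R'(q) (1 - q) dq`. Integrating by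
parts, the last integral equals `∫ R - R(κ*) (1 - κ*)`, and concavity bounds `∫ R` from below by
the trapezoid `R(κ*) (1 - κ*) / 2`. -/

variable {s : Set ℝ} {f g : ℝ → ℝ} {a b x y z : ℝ}

theorem ConvexOn.mul_le_secant (hf : ConvexOn ℝ s f) (hx : x ∈ s) (hz : z ∈ s) (hxy : x ≤ y)
    (hyz : y ≤ z) : (z - x) * f y ≤ (z - y) * f x + (y - x) * f z := by
  rcases hxy.eq_or_lt with rfl | hxy
  · simp
  rcases hyz.eq_or_lt with rfl | hyz
  · simp
  exact hf.secant_mono_aux1 hx hz hxy hyz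

theorem ConcaveOn.secant_le_mul (hf : ConcaveOn ℝ s f) (hx : x ∈ s) (hz : z ∈ s) (hxy : x ≤ y)
    (hyz : y ≤ z) : (z - y) * f x + (y - x) * f z ≤ (z - x) * f y := by
  have := hf.neg.mul_le_secant hx hz hxy hyz
  simp only [Pi.neg_apply] at this
  linarith

theorem ConcaveOn.deriv_nonpos_of_le (hf : ConcaveOn ℝ s f) (hx : x ∈ s) (hy : y ∈ s)
    (hxy : x < y) (hfxy : f y ≤ f x) (hfd : DifferentiableAt ℝ f y) : deriv f y ≤ 0 := by
  refine (hf.deriv_le_slope hx hy hxy hfd).trans ?_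
  rw [slope_def_field]
  exact div_nonpos_of_nonpos_of_nonneg (sub_nonpos.2 hfxy) (sub_nonneg.2 hxy.le)

theorem intervalIntegrable_deriv_of_nonpos (hab : a ≤ b) (hfc : ContinuousOn f (Icc a b))
    (hfd : DifferentiableOn ℝ f (Ioo a b)) (hf' : ∀ x ∈ Ioo a b, deriv f x ≤ 0) :
    IntervalIntegrable (deriv f) volume a b := by
  have hint : IntervalIntegrable (-deriv f) volume a b := by
    refine intervalIntegrable_deriv_of_nonneg (g := -f) ?_ (fun x hx ↦ ?_) (fun x hx ↦ ?_)
    · simpa [uIcc_of_le hab] using hfc.neg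
    · rw [min_eq_left hab, max_eq_right hab] at hx
      exact ((hfd x hx).differentiableAt (isOpen_Ioo.mem_nhds hx)).hasDerivAt.neg
    · rw [min_eq_left hab, max_eq_right hab] at hx
      exact neg_nonneg.2 (hf' x hx)
  simpa using hint.neg

theorem integral_deriv_mul_sub_eq (hab : a ≤ b) (hfc : ContinuousOn f (Icc a b))
    (hfd : DifferentiableOn ℝ f (Ioo a b)) (hf' : IntervalIntegrable (deriv f) volume a b) :
    ∫ x in a..b, deriv f x * (b - x) = (∫ x in a..b, f x) - f a * (b - a) := by
  have h := integral_mul_deriv_eq_deriv_mul_of_hasDerivAt (u := fun x ↦ b - x) (u' := fun _ ↦ -1)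
    (by fun_prop) (by rwa [uIcc_of_le hab])
    (fun x _ ↦ by simpa using (hasDerivAt_id x).const_sub b)
    (fun x hx ↦ by
      rw [min_eq_left hab, max_eq_right hab] at hx
      exact ((hfd x hx).differentiableAt (isOpen_Ioo.mem_nhds hx)).hasDerivAt)
    intervalIntegrable_const hf'
  simp only [sub_self, zero_mul, neg_one_mul, intervalIntegral.integral_neg] at h
  simp only [mul_comm (deriv f _)]
  linarith

theorem ConcaveOn.trapezoid_le_integral (hab : a ≤ b) (hf : ConcaveOn ℝ (Icc a b) f)
    (hfi : IntervalIntegrable f volume a b) :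
    (b - a) * (f a + f b) / 2 ≤ ∫ x in a..b, f x := by
  rcases hab.eq_or_lt with rfl | hab
  · simp
  have hchord : ∫ x in a..b, ((b - x) * f a + (x - a) * f b) = (b - a) ^ 2 * (f a + f b) / 2 := by
    rw [intervalIntegral.integral_add
      ((by fun_prop : Continuous fun x ↦ (b - x) * f a).intervalIntegrable _ _)
      ((by fun_prop : Continuous fun x ↦ (x - a) * f b).intervalIntegrable _ _)]
    rw [intervalIntegral.integral_mul_const, intervalIntegral.integral_mul_const,
      intervalIntegral.integral_comp_sub_left (fun x ↦ x),
      intervalIntegral.integral_comp_sub_right (fun x ↦ x), integral_id, integral_id]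
    ring
  have key : (b - a) ^ 2 * (f a + f b) / 2 ≤ (b - a) * ∫ x in a..b, f x := by
    rw [← hchord, ← intervalIntegral.integral_const_mul]
    refine integral_mono_on hab.le
      ((by fun_prop : Continuous fun x ↦ (b - x) * f a + (x - a) * f b).intervalIntegrable _ _)
      (hfi.const_mul _) fun x hx ↦ ?_
    exact hf.secant_le_mul (left_mem_Icc.2 hab.le) (right_mem_Icc.2 hab.le) hx.1 hx.2
  nlinarith

theorem ConcaveOn.neg_le_integral_deriv_mul_sub (hab : a ≤ b) (hf : ConcaveOn ℝ (Icc a b) f)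
    (hfc : ContinuousOn f (Icc a b)) (hfd : DifferentiableOn ℝ f (Ioo a b))
    (hf' : IntervalIntegrable (deriv f) volume a b) :
    -((b - a) * (f a - f b)) / 2 ≤ ∫ x in a..b, deriv f x * (b - x) := by
  rw [integral_deriv_mul_sub_eq hab hfc hfd hf']
  linarith [hf.trapezoid_le_integral hab (hfc.intervalIntegrable_of_Icc hab)]

theorem ConcaveOn.integral_deriv_mul_ge_of_convexOn (hab : a ≤ b) (hf : ConcaveOn ℝ (Icc a b) f)
    (hfc : ContinuousOn f (Icc a b)) (hfd : DifferentiableOn ℝ f (Ioo a b))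
    (hfa : ∀ x ∈ Icc a b, f x ≤ f a) (hg : ConvexOn ℝ (Icc a b) g)
    (hgc : ContinuousOn g (Icc a b)) (hga : 0 ≤ g a) (hgb : g b = 0) :
    -(g a * (f a - f b)) / 2 ≤ ∫ x in a..b, deriv f x * g x := by
  rcases hab.eq_or_lt with rfl | hab
  · simp
  have ha : a ∈ Icc a b := left_mem_Icc.2 hab.le
  have hb : b ∈ Icc a b := right_mem_Icc.2 hab.le
  have hf'_nonpos : ∀ x ∈ Ioo a b, deriv f x ≤ 0 := fun x hx ↦
    hf.deriv_nonpos_of_le ha (Ioo_subset_Icc_self hx) hx.1 (hfa x (Ioo_subset_Icc_self hx))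
      (hfd.differentiableAt (isOpen_Ioo.mem_nhds hx))
  have hf'_int := intervalIntegrable_deriv_of_nonpos hab.le hfc hfd hf'_nonpos
  have hg_secant : ∀ x ∈ Icc a b, (b - a) * g x ≤ g a * (b - x) := fun x hx ↦ by
    simpa [hgb, mul_comm] using hg.mul_le_secant ha hb hx.1 hx.2
  have hcompare : g a * ∫ x in a..b, deriv f x * (b - x) ≤
      (b - a) * ∫ x in a..b, deriv f x * g x := by
    rw [← intervalIntegral.integral_const_mul, ← intervalIntegral.integral_const_mul]
    refine integral_mono_on_of_le_Ioo hab.le ?_ ?_ fun x hx ↦ ?_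
    · exact (hf'_int.mul_continuousOn (by fun_prop)).const_mul _
    · exact (hf'_int.mul_continuousOn (by rwa [uIcc_of_le hab.le])).const_mul _
    · calc g a * (deriv f x * (b - x)) = deriv f x * (g a * (b - x)) := by ring
        _ ≤ deriv f x * ((b - a) * g x) :=
          mul_le_mul_of_nonpos_left (hg_secant x (Ioo_subset_Icc_self hx)) (hf'_nonpos x hx)
        _ = (b - a) * (deriv f x * g x) := by ring
  refine le_of_mul_le_mul_left ?_ (sub_pos.2 hab)
  calc (b - a) * (-(g a * (f a - f b)) / 2) = g a * (-((b - a) * (f a - f b)) / 2) := by ring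
    _ ≤ g a * ∫ x in a..b, deriv f x * (b - x) :=
      mul_le_mul_of_nonneg_left (hf.neg_le_integral_deriv_mul_sub hab.le hfc hfd hf'_int) hga
    _ ≤ (b - a) * ∫ x in a..b, deriv f x * g x := hcompare

theorem leaderboard_negative_part_bound_general
    (R : ℝ → ℝ)
    (hR_diff : DifferentiableOn ℝ R (Set.Icc 0 1))
    (hR_concave : ConcaveOn ℝ (Set.Icc 0 1) R)
    (hR1 : R 1 = 0)
    (κstar : ℝ) (hκ : κstar ∈ Set.Icc (0:ℝ) 1)
    (hκ_max : ∀ q ∈ Set.Icc (0:ℝ) 1, R q ≤ R κstar)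
    (S : ℝ → ℝ)
    (hS_diff : DifferentiableOn ℝ S (Set.Icc 0 1))
    (hS_convex : ConvexOn ℝ (Set.Icc 0 1) S)
    (hS_anti : AntitoneOn S (Set.Icc 0 1))
    (hS1 : S 1 = 0) :
    -(1/2) * S κstar * R κstar ≤ ∫ q in κstar..1, deriv R q * S q := by
  have hsub : Icc κstar 1 ⊆ Icc 0 1 := Icc_subset_Icc_left hκ.1
  have hSκ : 0 ≤ S κstar := hS1 ▸ hS_anti hκ (right_mem_Icc.2 zero_le_one) hκ.2
  have h := (hR_concave.subset hsub (convex_Icc _ _)).integral_deriv_mul_ge_of_convexOn hκ.2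
    (hR_diff.continuousOn.mono hsub) (hR_diff.mono (Ioo_subset_Icc_self.trans hsub))
    (fun q hq ↦ hκ_max q (hsub hq)) (hS_convex.subset hsub (convex_Icc _ _))
    (hS_diff.continuousOn.mono hsub) hSκ hS1
  rw [hR1] at h
  linarith

theorem leaderboard_negative_part_bound
    (R : ℝ → ℝ)
    (hR_diff : DifferentiableOn ℝ R (Set.Icc 0 1))
    (hR_concave : ConcaveOn ℝ (Set.Icc 0 1) R)
    (hR0 : R 0 = 0) (hR1 : R 1 = 0)
    (κstar : ℝ) (hκ : κstar ∈ Set.Icc (0:ℝ) 1)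
    (hκ_max : ∀ q ∈ Set.Icc (0:ℝ) 1, R q ≤ R κstar)
    (S : ℝ → ℝ)
    (hS_diff : DifferentiableOn ℝ S (Set.Icc 0 1))
    (hS_convex : ConvexOn ℝ (Set.Icc 0 1) S)
    (hS_anti : AntitoneOn S (Set.Icc 0 1))
    (hS1 : S 1 = 0) :
    -(1/2) * S κstar * R κstar ≤ ∫ q in κstar..1, deriv R q * S q :=
  leaderboard_negative_part_bound_general R hR_diff hR_concave hR1 κstar hκ hκ_max S hS_diff
    hS_convex hS_anti hS1
end

section
/- Let n ≥ 2 be an integer, let w : {1,…,n} → ℝ be nonincreasing (w_1 ≥ w_2 ≥ … ≥ w_n), and let k ∈ {0,…,n} be such that w_i ≥ 0 for all i ≤ k and w_i < 0 for all i > k. For a badge assignment r : {1,…,n} → ℕ and each i, let n_g(i,r) = |{j ≠ i : r_j > r_i}| and define σ_i(r) = 1 − n_g(i,r)/(n−1). Then for every badge assignment r, ∑_{i=1}^{n} w_i·σ_i(r) ≤ ∑_{i=1}^{k} w_i + ∑_{i=k+1}^{n} w_i·(1 − (i−1)/(n−1)); that is, when ties impose no cost (β = 0) the virtual surplus is maximized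 by grouping all users with nonnegative weight into the single highest badge and assigning distinct decreasing badges to the users with negative weight. -/
/-!
Write `g i` for the number of users with a strictly higher badge than user `i`, so that
`σ i = 1 - g i / (n - 1)`; everything reduces to `∑_{i ≥ k} w i * i ≤ ∑ i, w i * g i`.
Replacing `w` by `-w⁻` only decreases the right side (as `g ≥ 0`) and leaves the left side
unchanged (as `w⁻ = -w` exactly from `k` on), and `w⁻` is nonnegative and monotone. For such
weights `v`, summing `v i * g i` over ordered pairs and symmetrizing shows that each unordered
pair `{i, j}`, `i < j`, costs at most `v j`, which is what it costs when every user is outranked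
by exactly the users of smaller index, i.e. `g i = i`.
-/

open Finset

/-- Status value of user `i` under badge assignment `r` with tie-breaking parameter
`β = 0`: `1 - n_g/(n-1)`, where `n_g` counts other users with a strictly higher badge
(users with an equal badge impose no status loss). -/
noncomputable def statusNoTieCost (n : ℕ) (r : Fin n → ℕ) (i : Fin n) : ℝ :=
  1 - ((Finset.univ.filter (fun j => j ≠ i ∧ r i < r j)).card : ℝ) / (n - 1)

theorem Finset.sum_sum_le_sum_sum_of_add_swap_le {ι M : Type*} [AddCommMonoid M] [LinearOrder M]
    [IsOrderedCancelAddMonoid M] (s : Finset ι) {f g : ι → ι → M}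
    (h : ∀ i ∈ s, ∀ j ∈ s, f i j + f j i ≤ g i j + g j i) :
    ∑ i ∈ s, ∑ j ∈ s, f i j ≤ ∑ i ∈ s, ∑ j ∈ s, g i j := by
  have double (F : ι → ι → M) :
      2 • ∑ i ∈ s, ∑ j ∈ s, F i j = ∑ i ∈ s, ∑ j ∈ s, (F i j + F j i) := by
    simp only [sum_add_distrib, two_nsmul, sum_comm (f := fun i j => F j i)]
  rw [← nsmul_le_nsmul_iff_right two_ne_zero, double, double]
  exact sum_le_sum fun i hi => sum_le_sum fun j hj => h i hi j hj

theorem Monotone.sum_mul_card_lt_le {ι α R : Type*} [Fintype ι] [LinearOrder ι] [LinearOrder α]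
    [CommRing R] [LinearOrder R] [IsStrictOrderedRing R] {v : ι → R} (hv : Monotone v)
    (hv0 : ∀ i, 0 ≤ v i) (r : ι → α) :
    ∑ i, v i * #{j | r i < r j} ≤ ∑ i, v i * #{j | j < i} := by
  simp only [card_filter, Nat.cast_sum, Nat.cast_ite, Nat.cast_one, Nat.cast_zero, mul_sum,
    mul_ite, mul_one, mul_zero]
  refine sum_sum_le_sum_sum_of_add_swap_le _ fun i _ j _ => ?_
  rcases lt_trichotomy i j with hij | rfl | hij
  · have := hv hij.le
    have := hv0 j
    split_ifs <;> first | linarith | order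
  · simp
  · have := hv hij.le
    have := hv0 i
    split_ifs <;> first | linarith | order

theorem statusNoTieCost_eq (n : ℕ) (r : Fin n → ℕ) (i : Fin n) :
    statusNoTieCost n r i = 1 - (#{j | r i < r j} : ℝ) / (n - 1) := by
  have outranked :
      univ.filter (fun j => j ≠ i ∧ r i < r j) = univ.filter (fun j => r i < r j) :=
    filter_congr fun j _ => and_iff_right_of_imp fun h => ne_of_apply_ne r h.ne'
  rw [statusNoTieCost, outranked]

theorem Fin.sum_filter_le_mul_val_le_sum_mul_card_lt {α : Type*} [LinearOrder α] {n : ℕ}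
    {w : Fin n → ℝ} (hw : Antitone w) {k : ℕ}
    (hw_nonneg : ∀ i : Fin n, (i : ℕ) < k → 0 ≤ w i)
    (hw_nonpos : ∀ i : Fin n, k ≤ (i : ℕ) → w i ≤ 0) (r : Fin n → α) :
    ∑ i ∈ univ.filter (fun i : Fin n => k ≤ (i : ℕ)), w i * (i : ℕ) ≤
      ∑ i, w i * #{j | r i < r j} := by
  calc ∑ i ∈ univ.filter (fun i : Fin n => k ≤ (i : ℕ)), w i * (i : ℕ)
      = ∑ i, -(w i)⁻ * #{j | j < i} := by
        rw [sum_filter]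
        refine sum_congr rfl fun i _ => ?_
        rw [filter_gt_eq_Iio, Fin.card_Iio]
        split_ifs with hi
        · rw [negPart_eq_neg.2 (hw_nonpos i hi), neg_neg]
        · rw [negPart_eq_zero.2 (hw_nonneg i (not_le.1 hi)), neg_zero, zero_mul]
    _ ≤ ∑ i, -(w i)⁻ * #{j | r i < r j} := by
        simp only [neg_mul, sum_neg_distrib, neg_le_neg_iff]
        exact (negPart_anti.comp hw).sum_mul_card_lt_le (fun i => negPart_nonneg _) r
    _ ≤ ∑ i, w i * #{j | r i < r j} := by
        refine sum_le_sum fun i _ => mul_le_mul_of_nonneg_right ?_ (Nat.cast_nonneg _)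
        linarith [posPart_sub_negPart (w i), posPart_nonneg (w i)]

theorem grouping_top_optimal_zero_ties_general
    (n : ℕ)
    (w : Fin n → ℝ)
    (hw_anti : ∀ i j : Fin n, i ≤ j → w j ≤ w i)
    (k : ℕ)
    (hw_nonneg : ∀ i : Fin n, (i : ℕ) < k → 0 ≤ w i)
    (hw_neg : ∀ i : Fin n, k ≤ (i : ℕ) → w i < 0) :
    ∀ r : Fin n → ℕ,
      ∑ i, w i * statusNoTieCost n r i ≤
        (∑ i ∈ Finset.univ.filter (fun i : Fin n => (i : ℕ) < k), w i) +
          ∑ i ∈ Finset.univ.filter (fun i : Fin n => k ≤ (i : ℕ)),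
            w i * (1 - (i : ℕ) / (n - 1)) := by
  intro r
  rcases Nat.eq_zero_or_pos n with rfl | hn
  · simp
  have tail_bound := div_le_div_of_nonneg_right
    (Fin.sum_filter_le_mul_val_le_sum_mul_card_lt hw_anti hw_nonneg
      (fun i hi => (hw_neg i hi).le) r)
    (sub_nonneg.2 (Nat.one_le_cast.2 hn) : (0 : ℝ) ≤ n - 1)
  simp only [sum_div, mul_div_assoc] at tail_bound
  have head_add_tail := sum_filter_add_sum_filter_not univ (fun i : Fin n => (i : ℕ) < k) w
  simp only [not_lt] at head_add_tail
  simp only [statusNoTieCost_eq, mul_sub, mul_one, sum_sub_distrib]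
  linarith

theorem grouping_top_optimal_zero_ties
    (n : ℕ) (hn : 2 ≤ n)
    (w : Fin n → ℝ)
    (hw_anti : ∀ i j : Fin n, i ≤ j → w j ≤ w i)
    (k : ℕ) (hk : k ≤ n)
    (hw_nonneg : ∀ i : Fin n, (i : ℕ) < k → 0 ≤ w i)
    (hw_neg : ∀ i : Fin n, k ≤ (i : ℕ) → w i < 0) :
    ∀ r : Fin n → ℕ,
      ∑ i, w i * statusNoTieCost n r i ≤
        (∑ i ∈ Finset.univ.filter (fun i : Fin n => (i : ℕ) < k), w i) +
          ∑ i ∈ Finset.univ.filter (fun i : Fin n => k ≤ (i : ℕ)),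
            w i * (1 - (i : ℕ) / (n - 1)) :=
  grouping_top_optimal_zero_ties_general n w hw_anti k hw_nonneg hw_neg
end
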